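/- Let f be a non-negative submodular function on finite ground set N, let k ≥ 1, let ε ∈ (0,1), and let S, OPT ⊆ N with |S \ OPT| ≤ k. If for every v ∈ S it holds that (1 + ε/k)·f(S) > f(S \ {v}), then f(S) ≥ f(S ∩ OPT)/(1 + ε). -/

import Mathlib

/-!
By submodularity, removing a set `T` from `S` costs at most the sum of the costs of removing
its elements one at a time. Local optimality bounds each single-element cost by `(ε / k) f(S)`,
and `S ∩ OPT` is obtained from `S` by removing the at most `k` elements of `S \ OPT`, so
`f(S ∩ OPT) ≤ (1 + ε) f(S)`.
-/

open Finset

section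

variable {α β : Type*} [DecidableEq α]

def Submodular [Add β] [LE β] (f : Finset α → β) : Prop :=
  ∀ S T : Finset α, f (S ∪ T) + f (S ∩ T) ≤ f S + f T

namespace Submodular

theorem add_sdiff_insert_le [Add β] [LE β] {f : Finset α → β}
    (hf : Submodular f) {S T : Finset α} {v : α} (hv : v ∉ T) :
    f S + f (S \ insert v T) ≤ f (S.erase v) + f (S \ T) := by
  have hunion : S.erase v ∪ (S \ T) = S := by
    ext x; by_cases hx : x = v <;> simp_all
  have hinter : S.erase v ∩ (S \ T) = S \ insert v T := by
    ext x; simp only [mem_inter, mem_erase, mem_sdiff, mem_insert]; tauto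
  simpa only [hunion, hinter] using hf (S.erase v) (S \ T)

theorem sdiff_le_add_sum_erase [AddCommGroup β] [PartialOrder β] [IsOrderedAddMonoid β]
    {f : Finset α → β} (hf : Submodular f) (S T : Finset α) :
    f (S \ T) ≤ f S + ∑ v ∈ T, (f (S.erase v) - f S) := by
  induction T using Finset.induction_on with
  | empty => simp
  | insert v T hv ih =>
    rw [sum_insert hv]
    have hstep := hf.add_sdiff_insert_le (S := S) hv
    calc f (S \ insert v T) ≤ f (S.erase v) + f (S \ T) - f S := le_sub_iff_add_le'.2 hstep
      _ ≤ f (S.erase v) + (f S + ∑ v ∈ T, (f (S.erase v) - f S)) - f S := by gcongr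
      _ = f S + (f (S.erase v) - f S + ∑ v ∈ T, (f (S.erase v) - f S)) := by abel

end Submodular

end

theorem stmt_4_general {N : Type*} [DecidableEq N] (f : Finset N → ℝ)
    (hsub : ∀ S T : Finset N, f (S ∪ T) + f (S ∩ T) ≤ f S + f T)
    (hnonneg : ∀ S : Finset N, 0 ≤ f S)
    (k : ℕ) (ε : ℝ) (hε : 0 < ε ∧ ε < 1)
    (S OPT : Finset N) (hcard : (S \ OPT).card ≤ k)
    (hloc : ∀ v ∈ S, (1 + ε / k) * f S > f (S.erase v)) :
    f S ≥ f (S ∩ OPT) / (1 + ε) := by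
  have hmarg : ∀ v ∈ S \ OPT, f (S.erase v) - f S ≤ ε / k * f S := fun v hv => by
    have := hloc v (mem_sdiff.1 hv).1; linarith
  have hratio : ((S \ OPT).card : ℝ) * (ε / k) ≤ ε := by
    -- for `k = 0` the left side is `0` since `ε / 0 = 0`
    rcases Nat.eq_zero_or_pos k with rfl | hk
    · simpa using hε.1.le
    · rw [mul_div_assoc', div_le_iff₀ (by positivity), mul_comm]
      exact mul_le_mul_of_nonneg_left (by exact_mod_cast hcard) hε.1.le
  have hbound : f (S ∩ OPT) ≤ (1 + ε) * f S := calc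
    f (S ∩ OPT) = f (S \ (S \ OPT)) := by rw [sdiff_sdiff_self_left]
    _ ≤ f S + ∑ v ∈ S \ OPT, (f (S.erase v) - f S) := Submodular.sdiff_le_add_sum_erase hsub _ _
    _ ≤ f S + (S \ OPT).card * (ε / k * f S) := by
      grw [sum_le_card_nsmul _ _ _ hmarg, nsmul_eq_mul]
    _ ≤ (1 + ε) * f S := by
      rw [← mul_assoc, add_mul, one_mul]
      grw [hratio]; exact hnonneg S
  rw [ge_iff_le, div_le_iff₀ (by linarith [hε.1])]
  linarith

theorem stmt_4 {N : Type*} [Fintype N] [DecidableEq N] (f : Finset N → ℝ)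
    (hsub : ∀ S T : Finset N, f (S ∪ T) + f (S ∩ T) ≤ f S + f T)
    (hnonneg : ∀ S : Finset N, 0 ≤ f S)
    (k : ℕ) (hk : 1 ≤ k) (ε : ℝ) (hε : 0 < ε ∧ ε < 1)
    (S OPT : Finset N) (hcard : (S \ OPT).card ≤ k)
    (hloc : ∀ v ∈ S, (1 + ε / k) * f S > f (S.erase v)) :
    f S ≥ f (S ∩ OPT) / (1 + ε) :=
  stmt_4_general f hsub hnonneg k ε hε S OPT hcard hloc
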